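/- Random-batch H-theorem: let c_{p,q} ≥ 0 be symmetric nonnegative coefficients (c_{p,q} = c_{q,p}), suppose w_p ≥ 0 for all p, ψ ≥ 0, and b_{p,q} = G_p − G_q for some vectors G_p ∈ ℝ^{d_v}. Then Σ_{p=1}^N w_p G_p · U^c_p = (1/2) Σ_{p,q} w_p w_q c_{p,q} ψ(x_p − x_q) (G_p − G_q) · (A(v_p − v_q)(G_p − G_q)) ≥ 0, where U^c_p = Σ_{q=1}^N w_q c_{p,q} ψ(x_p − x_q) A(v_p − v_q) b_{p,q}. -/
import Mathlib


open Matrix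
open scoped Classical

/-- The Landau collision kernel `A(z) = C ‖z‖^(γ+2) (I − z zᵀ/‖z‖²)` for `z ≠ 0`,
with the convention `A(0) = 0`. -/
noncomputable def landauA (d : ℕ) (C γ : ℝ) (z : Fin d → ℝ) :
    Matrix (Fin d) (Fin d) ℝ :=
  if z = 0 then 0
  else (C * Real.sqrt (z ⬝ᵥ z) ^ (γ + 2)) •
    (1 - (z ⬝ᵥ z)⁻¹ • Matrix.vecMulVec z z)

lemma vecMulVec_mulVec' {d : ℕ} (z u : Fin d → ℝ) :
    (Matrix.vecMulVec z z).mulVec u = (z ⬝ᵥ u) • z := by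
  ext i
  simp [Matrix.vecMulVec, Matrix.mulVec, dotProduct, Finset.sum_mul, Finset.mul_sum]
  congr 1; ext j; ring

lemma landauA_form {d : ℕ} (C γ : ℝ) (z u v : Fin d → ℝ) :
    u ⬝ᵥ (landauA d C γ z).mulVec v =
      if z = 0 then 0 else
        (C * Real.sqrt (z ⬝ᵥ z) ^ (γ + 2)) *
          (u ⬝ᵥ v - (z ⬝ᵥ z)⁻¹ * ((z ⬝ᵥ u) * (z ⬝ᵥ v))) := by
  unfold landauA
  split_ifs with h
  · simp
  · rw [Matrix.smul_mulVec, Matrix.sub_mulVec, Matrix.smul_mulVec,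
      Matrix.one_mulVec, vecMulVec_mulVec']
    simp only [dotProduct_smul, dotProduct_sub, smul_eq_mul]
    rw [dotProduct_comm u z]
    set s := Real.sqrt (z ⬝ᵥ z) ^ (γ + 2)
    ring

lemma landauA_neg {d : ℕ} (C γ : ℝ) (z : Fin d → ℝ) :
    landauA d C γ (-z) = landauA d C γ z := by
  unfold landauA
  have h0 : (-z = 0) ↔ (z = 0) := neg_eq_zero
  have hd : (-z : Fin d → ℝ) ⬝ᵥ (-z) = z ⬝ᵥ z := by simp
  have hv : Matrix.vecMulVec (-z) (-z) = Matrix.vecMulVec z z := by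
    ext i j; simp [Matrix.vecMulVec]
  rw [hd, hv]
  simp only [h0]

lemma landauA_nonneg {d : ℕ} {C : ℝ} (γ : ℝ) (hC : 0 ≤ C) (z u : Fin d → ℝ) :
    0 ≤ u ⬝ᵥ (landauA d C γ z).mulVec u := by
  rw [landauA_form]
  split_ifs with h
  · exact le_refl 0
  · apply mul_nonneg
    · exact mul_nonneg hC (Real.rpow_nonneg (Real.sqrt_nonneg _) _)
    · have hzz : 0 < z ⬝ᵥ z := by
        have hnn : (0:ℝ) ≤ z ⬝ᵥ z := Finset.sum_nonneg fun i _ => mul_self_nonneg _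
        rcases lt_or_eq_of_le hnn with h1 | h1
        · exact h1
        · exact absurd (dotProduct_self_eq_zero.mp h1.symm) h
      have hcs : (z ⬝ᵥ u) ^ 2 ≤ (z ⬝ᵥ z) * (u ⬝ᵥ u) := by
        have := Finset.sum_mul_sq_le_sq_mul_sq Finset.univ z u
        simpa [dotProduct, sq] using this
      rw [sub_nonneg]
      rw [inv_mul_le_iff₀ hzz]
      calc (z ⬝ᵥ u) * (z ⬝ᵥ u) = (z ⬝ᵥ u) ^ 2 := (sq _).symm
        _ ≤ (z ⬝ᵥ z) * (u ⬝ᵥ u) := hcs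

lemma dotProduct_sum' {n : Type*} [Fintype n] {ι : Type*} (s : Finset ι)
    (u : n → ℝ) (f : ι → n → ℝ) :
    u ⬝ᵥ (∑ i ∈ s, f i) = ∑ i ∈ s, u ⬝ᵥ f i := by
  simp only [dotProduct, Finset.sum_apply, Finset.mul_sum]
  exact Finset.sum_comm

lemma landauA_symm_bilin {d : ℕ} (C γ : ℝ) (z u v : Fin d → ℝ) :
    u ⬝ᵥ (landauA d C γ z).mulVec v = v ⬝ᵥ (landauA d C γ z).mulVec u := by
  rw [landauA_form, landauA_form]
  split_ifs with h
  · rfl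
  · rw [dotProduct_comm v u]
    set s := Real.sqrt (z ⬝ᵥ z) ^ (γ + 2)
    ring

/-- Random-batch H-theorem: for symmetric nonnegative coefficients `c_{p,q}`,
nonnegative weights and spline, and `b_{p,q} = G_p − G_q`, one has
`Σ_p w_p G_p · U^c_p
  = (1/2) Σ_{p,q} w_p w_q c_{p,q} ψ(x_p − x_q)(G_p − G_q)·(A(v_p − v_q)(G_p − G_q)) ≥ 0`. -/
theorem random_batch_H_theorem (dx dv N : ℕ) (C γ : ℝ) (hC : 0 < C)
    (w : Fin N → ℝ) (hw : ∀ p, 0 ≤ w p)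
    (x : Fin N → Fin dx → ℝ) (v : Fin N → Fin dv → ℝ)
    (ψ : (Fin dx → ℝ) → ℝ) (hψ : ∀ y, ψ (-y) = ψ y) (hψ0 : ∀ y, 0 ≤ ψ y)
    (c : Fin N → Fin N → ℝ) (hc : ∀ p q, c p q = c q p) (hc0 : ∀ p q, 0 ≤ c p q)
    (G : Fin N → Fin dv → ℝ)
    (b : Fin N → Fin N → Fin dv → ℝ) (hb : ∀ p q, b p q = G p - G q)
    (U : Fin N → Fin dv → ℝ)
    (hU : ∀ p, U p = ∑ q : Fin N,
      (w q * c p q * ψ (x p - x q)) • (landauA dv C γ (v p - v q)).mulVec (b p q)) :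
    ∑ p : Fin N, w p * (G p ⬝ᵥ U p)
      = (1 / 2) * ∑ p : Fin N, ∑ q : Fin N,
        w p * w q * c p q * ψ (x p - x q) *
          ((G p - G q) ⬝ᵥ (landauA dv C γ (v p - v q)).mulVec (G p - G q)) ∧
    0 ≤ ∑ p : Fin N, w p * (G p ⬝ᵥ U p) := by
  set A : Fin N → Fin N → Matrix (Fin dv) (Fin dv) ℝ :=
    fun p q => landauA dv C γ (v p - v q) with hA
  set F : Fin N → Fin N → ℝ := fun p q =>
    w p * w q * c p q * ψ (x p - x q) *
      ((G p - G q) ⬝ᵥ (A p q).mulVec (G p - G q)) with hF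
  -- rewrite S as double sum
  have hS : ∑ p : Fin N, w p * (G p ⬝ᵥ U p)
      = ∑ p : Fin N, ∑ q : Fin N,
          w p * (w q * c p q * ψ (x p - x q)) *
            (G p ⬝ᵥ (A p q).mulVec (G p - G q)) := by
    refine Finset.sum_congr rfl fun p _ => ?_
    rw [hU p]
    rw [dotProduct_sum', Finset.mul_sum]
    refine Finset.sum_congr rfl fun q _ => ?_
    rw [hb, dotProduct_smul]
    simp [smul_eq_mul]; ring
  -- symmetry facts
  have hAsymm : ∀ p q, A p q = A q p := by
    intro p q
    have : v q - v p = -(v p - v q) := by ring_nf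
    rw [hA]; simp only
    rw [show v q - v p = -(v p - v q) by ring, landauA_neg]
  have hψsymm : ∀ p q, ψ (x q - x p) = ψ (x p - x q) := by
    intro p q
    rw [show x q - x p = -(x p - x q) by ring, hψ]
  have key : ∀ p q,
      w p * (w q * c p q * ψ (x p - x q)) * (G p ⬝ᵥ (A p q).mulVec (G p - G q))
      + w q * (w p * c q p * ψ (x q - x p)) * (G q ⬝ᵥ (A q p).mulVec (G q - G p))
      = F p q := by
    intro p q
    rw [← hAsymm p q, hc q p, hψsymm p q]
    have h1 : G q ⬝ᵥ (A p q).mulVec (G q - G p)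
        = - (G q ⬝ᵥ (A p q).mulVec (G p - G q)) := by
      rw [show (G q - G p : Fin dv → ℝ) = -(G p - G q) by ring]
      rw [Matrix.mulVec_neg, dotProduct_neg]
    rw [h1, hF]
    simp only
    rw [sub_dotProduct]
    ring
  have hdouble : 2 * (∑ p : Fin N, w p * (G p ⬝ᵥ U p))
      = ∑ p : Fin N, ∑ q : Fin N, F p q := by
    rw [two_mul, hS]
    nth_rewrite 2 [Finset.sum_comm]
    rw [← Finset.sum_add_distrib]
    refine Finset.sum_congr rfl fun p _ => ?_
    rw [← Finset.sum_add_distrib]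
    exact Finset.sum_congr rfl fun q _ => key p q
  have hFnonneg : ∀ p q, 0 ≤ F p q := by
    intro p q
    apply mul_nonneg
    · exact mul_nonneg (mul_nonneg (mul_nonneg (hw p) (hw q)) (hc0 p q)) (hψ0 _)
    · exact landauA_nonneg γ hC.le _ _
  have heq : ∑ p : Fin N, w p * (G p ⬝ᵥ U p)
      = (1 / 2) * ∑ p : Fin N, ∑ q : Fin N, F p q := by
    rw [← hdouble]; ring
  constructor
  · exact heq
  · rw [heq]
    apply mul_nonneg (by norm_num)
    exact Finset.sum_nonneg fun p _ => Finset.sum_nonneg fun q _ => hFnonneg p q
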